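/- arXiv:1501.07007 — 7 statements merged into one kernel-verified Lean document; each statement's English description precedes it below -/
import Mathlib

section
/- Let X_{r,β} be the n×n lower-triangular Toeplitz matrix with entries (X_{r,β})_{ij} = 0 if i < j, r^{n-1} if i = j, and β r^{n-(i-j+1)} if i > j. If β = 1 - r² with 0 < r ≤ 1, then the spectral norm of X_{r,β} equals 1. -/
/-!
Writing `yᵢ = rⁱ xᵢ` and `sᵢ = y₀ + ⋯ + yᵢ₋₁`, the `i`-th entry of `X x` is `rⁿ⁻¹⁻ⁱ (yᵢ + (1 - r²) sᵢ)`,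
and for `β = 1 - r²` the squares of these entries telescope:
`‖X x‖² = r²ⁿ ‖x‖² + (1 - r²) ⟪w, x⟫²` with `w = (rⁱ)ᵢ`.
Since `(1 - r²) ‖w‖² = 1 - r²ⁿ`, Cauchy–Schwarz gives `‖X x‖ ≤ ‖x‖`, with equality at `x = w`.
-/

open scoped Matrix.Norms.L2Operator

noncomputable def Xmat (n : ℕ) (r beta : ℝ) : Matrix (Fin n) (Fin n) ℝ :=
  Matrix.of fun i j =>
    if (i : ℕ) < (j : ℕ) then 0
    else if i = j then r ^ (n - 1)
    else beta * r ^ (n - ((i : ℕ) - (j : ℕ) + 1))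

open scoped RealInnerProductSpace
open Matrix Finset

theorem ContinuousLinearMap.norm_eq_sqrt_of_norm_sq_apply_eq {E F : Type*}
    [NormedAddCommGroup E] [InnerProductSpace ℝ E] [SeminormedAddCommGroup F] [NormedSpace ℝ F]
    (T : E →L[ℝ] F) {c d : ℝ} (hd : 0 ≤ d) {w : E} (hw : w ≠ 0)
    (hT : ∀ x, ‖T x‖ ^ 2 = c * ‖x‖ ^ 2 + d * ⟪w, x⟫ ^ 2) :
    ‖T‖ = √(c + d * ‖w‖ ^ 2) := by
  set M := c + d * ‖w‖ ^ 2
  have hTw : ‖T w‖ ^ 2 = M * ‖w‖ ^ 2 := by rw [hT, real_inner_self_eq_norm_sq]; ring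
  have hM : 0 ≤ M := nonneg_of_mul_nonneg_left (hTw ▸ sq_nonneg _) (by positivity)
  have hsq : ∀ x : E, (√M * ‖x‖) ^ 2 = M * ‖x‖ ^ 2 := fun x => by rw [mul_pow, Real.sq_sqrt hM]
  refine opNorm_eq_of_bounds (Real.sqrt_nonneg _) (fun x => ?_) fun N _ hN => ?_
  · have hcs : ⟪w, x⟫ ^ 2 ≤ ‖w‖ ^ 2 * ‖x‖ ^ 2 := by
      rw [← mul_pow, ← sq_abs]
      exact pow_le_pow_left₀ (abs_nonneg _) (abs_real_inner_le_norm w x) 2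
    rw [← sq_le_sq₀ (norm_nonneg _) (by positivity), hT, hsq]
    nlinarith
  · have hwT : ‖T w‖ = √M * ‖w‖ := by
      rw [← sq_eq_sq₀ (norm_nonneg _) (by positivity), hTw, hsq]
    exact le_of_mul_le_mul_right (hwT ▸ hN w) (norm_pos_iff.mpr hw)

section PrefixSum

variable {M : Type*} [AddCommMonoid M] {n : ℕ}

def prefixSum (y : Fin n → M) (m : ℕ) : M := ∑ j : Fin n with j.val < m, y j

@[simp]
lemma prefixSum_zero (y : Fin n → M) : prefixSum y 0 = 0 := by
  simp [prefixSum]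

lemma prefixSum_of_le (y : Fin n → M) {m : ℕ} (hm : n ≤ m) : prefixSum y m = ∑ j, y j := by
  rw [prefixSum, filter_true_of_mem fun j _ => j.isLt.trans_le hm]

lemma prefixSum_succ (y : Fin n → M) (i : Fin n) :
    prefixSum y (i + 1) = prefixSum y i + y i := by
  have : univ.filter (fun j : Fin n => j.val < i + 1) =
      insert i (univ.filter fun j : Fin n => j.val < i) := by
    ext j
    simp only [mem_filter, mem_univ, true_and, mem_insert, Fin.ext_iff]
    omega
  rw [prefixSum, this, sum_insert (by simp), add_comm]
  rfl

end PrefixSum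

section Xmat

variable (n : ℕ) (r : ℝ)

lemma Xmat_apply (i j : Fin n) :
    Xmat n r (1 - r ^ 2) i j = r ^ (n - 1 - i) *
      ((if j = i then r ^ (j : ℕ) else 0) + (1 - r ^ 2) * if (j : ℕ) < i then r ^ (j : ℕ) else 0) := by
  have hi := i.isLt
  rcases lt_trichotomy (j : ℕ) i with h | h | h
  · simp only [Xmat, of_apply, if_neg h.not_gt, if_neg (Fin.ne_of_gt h), if_pos h,
      if_neg (Fin.ne_of_lt h), zero_add]
    rw [mul_left_comm, ← pow_add]
    congr 2
    omega
  · obtain rfl := Fin.ext h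
    simp only [Xmat, of_apply, lt_irrefl, if_false, if_true, mul_zero, add_zero, ← pow_add]
    congr 1
    omega
  · simp only [Xmat, of_apply, if_pos h, if_neg (Fin.ne_of_gt h), if_neg h.not_gt, mul_zero,
      add_zero]

lemma Xmat_mulVec (x : Fin n → ℝ) (i : Fin n) :
    (Xmat n r (1 - r ^ 2) *ᵥ x) i = r ^ (n - 1 - i) *
      (r ^ (i : ℕ) * x i + (1 - r ^ 2) * prefixSum (fun j => r ^ (j : ℕ) * x j) i) := by
  simp only [mulVec, dotProduct, Xmat_apply, prefixSum, sum_filter, mul_add, add_mul,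
    sum_add_distrib, mul_sum, mul_assoc, ite_mul, zero_mul, mul_ite, mul_zero, sum_ite_eq',
    mem_univ, if_true]

lemma sum_sq_Xmat_mulVec (x : Fin n → ℝ) :
    ∑ i, (Xmat n r (1 - r ^ 2) *ᵥ x) i ^ 2 =
      r ^ (2 * n) * ∑ i, x i ^ 2 + (1 - r ^ 2) * (∑ i : Fin n, r ^ (i : ℕ) * x i) ^ 2 := by
  set y : Fin n → ℝ := fun j => r ^ (j : ℕ) * x j
  set Φ : ℕ → ℝ := fun m => (1 - r ^ 2) * (r ^ (n - m) * prefixSum y m) ^ 2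
  -- the telescoping rests on `(y + (1 - r²) s)² - r² y² = (1 - r²) ((s + y)² - r² s²)`
  have hstep : ∀ i : Fin n,
      (Xmat n r (1 - r ^ 2) *ᵥ x) i ^ 2 = r ^ (2 * n) * x i ^ 2 + (Φ (i + 1) - Φ i) := by
    intro i
    have hi := i.isLt
    have h1 : r ^ (n - i) = r ^ (n - 1 - i) * r := by rw [← pow_succ]; congr 1; omega
    have h2 : r ^ (n - (i + 1)) = r ^ (n - 1 - i) := by congr 1; omega
    have h3 : r ^ (2 * n) = (r ^ (n - 1 - i) * r * r ^ (i : ℕ)) ^ 2 := by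
      rw [← pow_succ, ← pow_add, ← pow_mul']; congr 1; omega
    simp only [Φ, Xmat_mulVec, prefixSum_succ, h1, h2, h3, y]
    ring
  calc ∑ i, (Xmat n r (1 - r ^ 2) *ᵥ x) i ^ 2
      = ∑ i : Fin n, (r ^ (2 * n) * x i ^ 2 + (Φ (i + 1) - Φ i)) :=
        sum_congr rfl fun i _ => hstep i
    _ = r ^ (2 * n) * ∑ i, x i ^ 2 + (Φ n - Φ 0) := by
      rw [sum_add_distrib, ← mul_sum, Fin.sum_univ_eq_sum_range (fun i => Φ (i + 1) - Φ i),
        sum_range_sub]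
    _ = _ := by simp [Φ, prefixSum_of_le y le_rfl, y]

lemma norm_sq_toEuclideanCLM_Xmat (x : EuclideanSpace ℝ (Fin n)) :
    ‖toEuclideanCLM (𝕜 := ℝ) (Xmat n r (1 - r ^ 2)) x‖ ^ 2 =
      r ^ (2 * n) * ‖x‖ ^ 2 + (1 - r ^ 2) * ⟪WithLp.toLp 2 fun i : Fin n => r ^ (i : ℕ), x⟫ ^ 2 := by
  simp only [EuclideanSpace.real_norm_sq_eq, ofLp_toEuclideanCLM, PiLp.inner_apply]
  simpa [mul_comm] using sum_sq_Xmat_mulVec n r x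

end Xmat

/-- If `β = 1 - r²` then `‖X_{r,β}‖ = 1`. -/
theorem stmt4 (n : ℕ) (hn : 0 < n) (r : ℝ) (hr0 : 0 < r) (hr1 : r ≤ 1) :
    ‖Xmat n r (1 - r ^ 2)‖ = 1 := by
  set w : EuclideanSpace ℝ (Fin n) := WithLp.toLp 2 fun i => r ^ (i : ℕ)
  have hw : w ≠ 0 := fun h => by simpa [w] using congr_fun (congrArg WithLp.ofLp h) ⟨0, hn⟩
  have hd : 0 ≤ 1 - r ^ 2 := by nlinarith
  have hgeom : (1 - r ^ 2) * ‖w‖ ^ 2 = 1 - r ^ (2 * n) := by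
    have : ‖w‖ ^ 2 = ∑ i ∈ range n, (r ^ 2) ^ i := by
      simp only [EuclideanSpace.real_norm_sq_eq, w, ← pow_mul, mul_comm _ 2]
      exact Fin.sum_univ_eq_sum_range (fun i => r ^ (2 * i)) n
    rw [this, mul_neg_geom_sum, pow_mul]
  rw [← l2_opNorm_toEuclideanCLM, ContinuousLinearMap.norm_eq_sqrt_of_norm_sq_apply_eq _ hd hw
    (norm_sq_toEuclideanCLM_Xmat n r), hgeom]
  simp
end

section
/- Let X_{r,β} be the n×n matrix with (X)_{ij} = 0 for i<j, r^{n-1} for i=j, β r^{n-(i-j+1)} for i>j, with β ≥ 1 and r ∈ (0,1]. Then ‖X_{r,β} (in dimension n)‖ ≤ ‖X_{r,β} (in dimension n+1)‖, i.e. the spectral norm grows monotonically with the dimension n. -/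
/-!
Deleting the first row and the last column of `X_{r,β}^{(n+1)}` leaves `X_{r,β}^{(n)}` with its
diagonal `r^{n-1}` raised to `β r^{n-1}`. So for `r ≥ 0`, `β ≥ 1` the matrix `X^{(n)}` is entrywise
dominated by a submatrix of `X^{(n+1)}`, and both have nonnegative entries. The spectral norm is
monotone under entrywise domination of absolute values (test the larger matrix on `|x|`) and does
not increase under passing to a submatrix.
-/

open scoped Matrix.Norms.L2Operator

open Function

namespace EuclideanSpace

variable {𝕜 : Type*} [RCLike 𝕜] {m n : Type*} [Fintype m] [Fintype n]

theorem norm_le_norm_of_forall_norm_le {x y : EuclideanSpace 𝕜 n} (h : ∀ i, ‖x i‖ ≤ ‖y i‖) :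
    ‖x‖ ≤ ‖y‖ := by
  rw [EuclideanSpace.norm_eq, EuclideanSpace.norm_eq]
  gcongr with i
  exact h i

theorem norm_toLp_comp_le (x : EuclideanSpace 𝕜 n) {e : m → n} (he : Injective e) :
    ‖WithLp.toLp 2 (fun i => x (e i))‖ ≤ ‖x‖ := by
  rw [EuclideanSpace.norm_eq, EuclideanSpace.norm_eq]
  gcongr
  calc ∑ i, ‖x (e i)‖ ^ 2 = ∑ k ∈ Finset.univ.map ⟨e, he⟩, ‖x k‖ ^ 2 := by simp
    _ ≤ ∑ k, ‖x k‖ ^ 2 := Finset.sum_le_univ_sum_of_nonneg fun k => by positivity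

end EuclideanSpace

namespace Matrix

variable {𝕜 : Type*} [RCLike 𝕜] {l m n o : Type*} [Fintype l] [Fintype m] [Fintype n] [Fintype o]
  [DecidableEq n]

theorem l2_opNorm_submatrix_id_le (A : Matrix m n 𝕜) {e : l → m} (he : Injective e) :
    ‖A.submatrix e id‖ ≤ ‖A‖ := by
  rw [l2_opNorm_def (A.submatrix e id)]
  refine ContinuousLinearMap.opNorm_le_bound _ (norm_nonneg _) fun x => ?_
  calc _ ≤ ‖(EuclideanSpace.equiv m 𝕜).symm (A *ᵥ x)‖ :=
        EuclideanSpace.norm_toLp_comp_le _ he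
    _ ≤ ‖A‖ * ‖x‖ := A.l2_opNorm_mulVec x

theorem l2_opNorm_submatrix_le [DecidableEq l] [DecidableEq m] [DecidableEq o]
    (A : Matrix m n 𝕜) {e : l → m} {f : o → n} (he : Injective e) (hf : Injective f) :
    ‖A.submatrix e f‖ ≤ ‖A‖ :=
  calc ‖A.submatrix e f‖ = ‖(Aᴴ.submatrix id e).submatrix f id‖ := by
        rw [← l2_opNorm_conjTranspose, conjTranspose_submatrix, submatrix_submatrix]; rfl
    _ ≤ ‖Aᴴ.submatrix id e‖ := l2_opNorm_submatrix_id_le _ hf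
    _ = ‖A.submatrix e id‖ := by rw [← conjTranspose_submatrix, l2_opNorm_conjTranspose]
    _ ≤ ‖A‖ := l2_opNorm_submatrix_id_le A he

theorem l2_opNorm_le_of_abs_le {A B : Matrix m n ℝ} (h : ∀ i j, |A i j| ≤ B i j) :
    ‖A‖ ≤ ‖B‖ := by
  rw [l2_opNorm_def A]
  refine ContinuousLinearMap.opNorm_le_bound _ (norm_nonneg _) fun x => ?_
  set y : EuclideanSpace ℝ n := WithLp.toLp 2 fun j => |x j|
  have hy : ‖y‖ = ‖x‖ := by simp [y, EuclideanSpace.norm_eq]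
  calc _ ≤ ‖(EuclideanSpace.equiv m ℝ).symm (B *ᵥ y)‖ := by
        refine EuclideanSpace.norm_le_norm_of_forall_norm_le fun i => ?_
        calc |∑ j, A i j * x j| ≤ ∑ j, |A i j * x j| := Finset.abs_sum_le_sum_abs _ _
          _ = ∑ j, |A i j| * |x j| := by simp only [abs_mul]
          _ ≤ ∑ j, B i j * |x j| := by gcongr with j; exact h i j
          _ ≤ |∑ j, B i j * (|x j|)| := le_abs_self _
    _ ≤ ‖B‖ * ‖x‖ := hy ▸ B.l2_opNorm_mulVec y

end Matrix

section Xmat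

variable {r beta : ℝ}

theorem Xmat_nonneg (hr : 0 ≤ r) (hb : 0 ≤ beta) (n : ℕ) (i j : Fin n) :
    0 ≤ Xmat n r beta i j := by
  simp only [Xmat, Matrix.of_apply]
  split_ifs <;> positivity

theorem Xmat_apply_le_succ_castSucc (hr : 0 ≤ r) (hb : 1 ≤ beta) (n : ℕ) (i j : Fin n) :
    Xmat n r beta i j ≤ Xmat (n + 1) r beta i.succ j.castSucc := by
  simp only [Xmat, Matrix.of_apply, Fin.ext_iff, Fin.val_succ, Fin.val_castSucc]
  rcases lt_trichotomy (i : ℕ) j with hij | hij | hij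
  · rw [if_pos hij]
    split_ifs <;> positivity
  · rw [if_neg (by omega), if_pos hij, if_neg (by omega), if_neg (by omega),
      show n + 1 - (i + 1 - j + 1) = n - 1 by omega]
    exact le_mul_of_one_le_left (by positivity) hb
  · rw [if_neg (by omega), if_neg (by omega), if_neg (by omega), if_neg (by omega),
      show n + 1 - (i + 1 - j + 1) = n - (i - j + 1) by omega]

end Xmat

theorem stmt6_general (n : ℕ) (r beta : ℝ) (hr0 : 0 < r) (hb1 : 1 ≤ beta) :
    ‖Xmat n r beta‖ ≤ ‖Xmat (n + 1) r beta‖ :=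
  calc ‖Xmat n r beta‖ ≤ ‖(Xmat (n + 1) r beta).submatrix Fin.succ Fin.castSucc‖ :=
        Matrix.l2_opNorm_le_of_abs_le fun i j => by
          rw [abs_of_nonneg (Xmat_nonneg hr0.le (zero_le_one.trans hb1) n i j)]
          exact Xmat_apply_le_succ_castSucc hr0.le hb1 n i j
    _ ≤ ‖Xmat (n + 1) r beta‖ :=
        Matrix.l2_opNorm_submatrix_le _ (Fin.succ_injective n) (Fin.castSucc_injective n)

/-- For `β ∈ [1,2]` and `r ∈ (0,1]`, the spectral norm of `X_{r,β}` grows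
monotonically with the dimension. -/
theorem stmt6 (n : ℕ) (r beta : ℝ) (hr0 : 0 < r) (hr1 : r ≤ 1)
    (hb1 : 1 ≤ beta) (hb2 : beta ≤ 2) :
    ‖Xmat n r beta‖ ≤ ‖Xmat (n + 1) r beta‖ :=
  stmt6_general n r beta hr0 hb1
end

section
/- Let T be an n×n contraction whose minimal polynomial is (z - λ)^n for some λ ∈ (-1,1). The analytic Toeplitz matrix T* with diagonal λ, first subdiagonal 1-λ², and k-th subdiagonal (-λ)^{k-1}(1-λ²) for k ≥ 1, has spectral norm at most 1 (i.e., T* is a contraction) and its only eigenvalue is λ with minimal polynomial (z-λ)^n. -/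
/-!
`T*` is the Blaschke factor `b(z) = (z + λ) / (1 + λ z)` evaluated at the nilpotent lower shift
`S`, i.e. `T* = λ + (1 - λ²) S (1 + λ S)⁻¹`. Hence `T* (1 + λ S) = λ + S`, and since
`‖y + λ z‖² - ‖λ y + z‖² = (1 - λ²)(‖y‖² - ‖z‖²)` and `‖S‖ ≤ 1`, writing `x = (1 + λ S) y` gives
`‖T* x‖ ≤ ‖x‖`. Moreover `T* - λ` is `1 - λ² ≠ 0` times `S` times a unit commuting with `S`, so it
is nilpotent of exactly the same index `n` as `S`.
-/

open Finset
open scoped Matrix.Norms.L2Operator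

noncomputable def Tstar (n : ℕ) (lam : ℝ) : Matrix (Fin n) (Fin n) ℝ :=
  Matrix.of fun i j =>
    if (i : ℕ) < (j : ℕ) then 0
    else if i = j then lam
    else (-lam) ^ ((i : ℕ) - (j : ℕ) - 1) * (1 - lam ^ 2)

section Spectrum

open Polynomial

variable {K A : Type*} [Field K] [Ring A] [Algebra K A]

theorem minpoly_eq_X_sub_C_pow {a : A} {c : K} {n : ℕ}
    (h : (a - algebraMap K A c) ^ n = 0) (h' : (a - algebraMap K A c) ^ (n - 1) ≠ 0) :
    minpoly K a = (X - C c) ^ n := by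
  have haeval (k : ℕ) : aeval a ((X - C c) ^ k) = (a - algebraMap K A c) ^ k := by simp
  have hint : IsIntegral K a := ⟨_, (monic_X_sub_C c).pow n, by rw [← aeval_def, haeval, h]⟩
  obtain ⟨i, hin, hassoc⟩ := (dvd_prime_pow (prime_X_sub_C c) n).mp
    (minpoly.dvd K a (by rw [haeval, h]))
  have hmin : minpoly K a = (X - C c) ^ i :=
    eq_of_monic_of_associated (minpoly.monic hint) ((monic_X_sub_C c).pow i) hassoc
  suffices n ≤ i by rw [hmin, le_antisymm hin this]
  by_contra! hi
  have hzero : (a - algebraMap K A c) ^ i = 0 := by rw [← haeval, ← hmin, minpoly.aeval]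
  exact h' (by rw [← Nat.sub_add_cancel (Nat.le_sub_one_of_lt hi), pow_add, hzero, mul_zero])

theorem spectrum_eq_singleton_zero_of_isNilpotent [Nontrivial A] {a : A} (h : IsNilpotent a) :
    spectrum K a = {0} := by
  ext r
  rw [spectrum.mem_iff, Set.mem_singleton_iff]
  constructor
  · intro hr
    by_contra hr0
    exact hr (sub_eq_add_neg (algebraMap K A r) a ▸ h.neg.isUnit_add_left_of_commute
      ((isUnit_iff_ne_zero.mpr hr0).map _) (Algebra.commutes _ _).symm)
  · rintro rfl
    simpa using h.not_isUnit

theorem spectrum_eq_singleton_of_isNilpotent_sub [Nontrivial A] {a : A} {c : K}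
    (h : IsNilpotent (a - algebraMap K A c)) : spectrum K a = {c} := by
  rw [← sub_add_cancel a (algebraMap K A c), add_comm, ← spectrum.singleton_add_eq,
    spectrum_eq_singleton_zero_of_isNilpotent h, Set.singleton_add_singleton, add_zero]

end Spectrum

section Blaschke

variable {R A : Type*} [CommRing R] [Ring A] [Algebra R A]

/-- The Taylor expansion `c + (1 - c²) z ∑ (-c z)^k` of `(z + c) / (1 + c z)`, cut off at order
`m`; it is exact at `z = s` when `s ^ m = 0`. -/
def blaschke (c : R) (s : A) (m : ℕ) : A :=
  algebraMap R A c + (1 - c ^ 2) • (s * ∑ k ∈ range m, (-c • s) ^ k)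

variable {c : R} {s : A} {m : ℕ}

theorem geom_sum_neg_smul_mul_one_add_smul (hs : s ^ m = 0) :
    (∑ k ∈ range m, (-c • s) ^ k) * (1 + c • s) = 1 :=
  calc _ = (∑ k ∈ range m, (-c • s) ^ k) * (1 - -c • s) := by rw [neg_smul, sub_neg_eq_add]
    _ = 1 := by rw [geom_sum_mul_neg, _root_.smul_pow, hs, smul_zero, sub_zero]

theorem blaschke_mul_one_add_smul (hs : s ^ m = 0) :
    blaschke c s m * (1 + c • s) = algebraMap R A c + s := by
  rw [blaschke, add_mul, smul_mul_assoc, mul_assoc, geom_sum_neg_smul_mul_one_add_smul hs,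
    mul_one, Algebra.algebraMap_eq_smul_one, smul_mul_assoc, one_mul, smul_add, smul_smul]
  module

theorem pow_blaschke_sub_algebraMap_eq_zero_iff (hs : s ^ m = 0) (hc : IsUnit (1 - c ^ 2))
    (k : ℕ) : (blaschke c s m - algebraMap R A c) ^ k = 0 ↔ s ^ k = 0 := by
  set v := ∑ i ∈ range m, (-c • s) ^ i
  have hcomm : Commute s v :=
    Commute.sum_right _ _ _ fun i _ => ((Commute.refl s).smul_right _).pow_right _
  have hv : IsUnit v := by
    have hcomm' : Commute v (1 + c • s) :=
      (Commute.one_right v).add_right (hcomm.symm.smul_right c)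
    refine (hcomm'.isUnit_mul_iff.mp ?_).1
    rw [geom_sum_neg_smul_mul_one_add_smul hs]
    exact isUnit_one
  rw [blaschke, add_sub_cancel_left, _root_.smul_pow, hcomm.mul_pow, (hc.pow k).smul_eq_zero,
    (hv.pow k).mul_left_eq_zero]

end Blaschke

section Contraction

variable {E : Type*} [NormedAddCommGroup E] [InnerProductSpace ℝ E] {c : ℝ}

theorem norm_smul_add_le_norm_add_smul (hc : |c| ≤ 1) {x z : E} (hzx : ‖z‖ ≤ ‖x‖) :
    ‖c • x + z‖ ≤ ‖x + c • z‖ := by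
  have hdiff : ‖x + c • z‖ ^ 2 - ‖c • x + z‖ ^ 2 = (1 - c ^ 2) * (‖x‖ ^ 2 - ‖z‖ ^ 2) := by
    rw [norm_add_sq_real, norm_add_sq_real, norm_smul, norm_smul, real_inner_smul_left,
      real_inner_smul_right, Real.norm_eq_abs, mul_pow, mul_pow, sq_abs]
    ring
  have h1 : 0 ≤ 1 - c ^ 2 := by nlinarith [abs_nonneg c, sq_abs c]
  have h2 : 0 ≤ ‖x‖ ^ 2 - ‖z‖ ^ 2 := by nlinarith [norm_nonneg z]
  exact (sq_le_sq₀ (norm_nonneg _) (norm_nonneg _)).mp (by nlinarith [mul_nonneg h1 h2])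

theorem ContinuousLinearMap.norm_le_one_of_mul_one_add_smul (hc : |c| ≤ 1)
    {s t : E →L[ℝ] E} (hs : ‖s‖ ≤ 1) (hu : IsUnit (1 + c • s))
    (ht : t * (1 + c • s) = algebraMap ℝ _ c + s) : ‖t‖ ≤ 1 := by
  refine t.opNorm_le_bound zero_le_one fun x => ?_
  set y := (↑hu.unit⁻¹ : E →L[ℝ] E) x
  have hx : x = y + c • s y := by
    have := DFunLike.congr_fun hu.mul_val_inv x
    simpa only [mul_apply_eq_comp, add_apply, one_apply_eq_self, smul_apply] using this.symm
  have htx : t x = c • y + s y := by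
    have := DFunLike.congr_fun ht y
    simp only [mul_apply_eq_comp, add_apply, one_apply_eq_self, smul_apply,
      ContinuousLinearMap.algebraMap_apply, map_add, map_smul] at this
    rw [hx, map_add, map_smul, this]
  rw [one_mul, htx, hx]
  exact norm_smul_add_le_norm_add_smul hc (by simpa using s.le_of_opNorm_le hs y)

theorem Matrix.l2_opNorm_blaschke_le_one {ι : Type*} [Fintype ι] [DecidableEq ι] (hc : |c| ≤ 1)
    {s : Matrix ι ι ℝ} {m : ℕ} (hs : s ^ m = 0) (hs1 : ‖s‖ ≤ 1) : ‖blaschke c s m‖ ≤ 1 := by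
  have hu : IsUnit (1 + c • s) :=
    IsNilpotent.isUnit_one_add ⟨m, by rw [_root_.smul_pow, hs, smul_zero]⟩
  let φ := toEuclideanCLM (𝕜 := ℝ) (n := ι)
  rw [← l2_opNorm_toEuclideanCLM] at hs1 ⊢
  refine ContinuousLinearMap.norm_le_one_of_mul_one_add_smul hc hs1 ?_ ?_
  · simpa only [map_add, map_one, map_smul] using hu.map φ
  · simpa only [map_mul, map_add, map_one, map_smul, AlgHomClass.commutes] using
      congrArg φ (blaschke_mul_one_add_smul (c := c) hs)

end Contraction

namespace Matrix

variable {n : ℕ}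

def lowerShift (n : ℕ) (R : Type*) [Zero R] [One R] : Matrix (Fin n) (Fin n) R :=
  of fun i j => if (i : ℕ) = j + 1 then 1 else 0

theorem lowerShift_apply {R : Type*} [Zero R] [One R] (i j : Fin n) :
    lowerShift n R i j = if (i : ℕ) = j + 1 then 1 else 0 := rfl

theorem lowerShift_pow_apply {R : Type*} [Semiring R] (k : ℕ) (i j : Fin n) :
    (lowerShift n R ^ k) i j = if (i : ℕ) = j + k then 1 else 0 := by
  induction k generalizing j with
  | zero => simp [one_apply, Fin.ext_iff]
  | succ k ih =>
    simp only [pow_succ, mul_apply, ih, lowerShift_apply, ite_zero_mul_ite_zero, mul_one]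
    by_cases h : (i : ℕ) = j + (k + 1)
    · rw [if_pos h, sum_eq_single ⟨j + 1, by omega⟩]
      · exact if_pos ⟨show (i : ℕ) = j + 1 + k by omega, rfl⟩
      · exact fun l _ hl => if_neg fun h' => hl (Fin.ext h'.2)
      · simp
    · rw [if_neg h]
      exact sum_eq_zero fun l _ => if_neg (by omega)

theorem lowerShift_pow_self {R : Type*} [Semiring R] : lowerShift n R ^ n = 0 := by
  ext i j
  rw [lowerShift_pow_apply, if_neg (by omega), zero_apply]

theorem lowerShift_pow_pred_ne_zero {R : Type*} [Semiring R] [Nontrivial R] (hn : 1 ≤ n) :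
    lowerShift n R ^ (n - 1) ≠ 0 := by
  intro h
  have := congr_fun₂ h ⟨n - 1, by omega⟩ ⟨0, hn⟩
  simp [lowerShift_pow_apply] at this

theorem lowerShift_mul_geom_sum_apply {R : Type*} [CommSemiring R] (c : R) (m : ℕ)
    (i j : Fin n) :
    (lowerShift n R * ∑ k ∈ range m, (c • lowerShift n R) ^ k) i j =
      if (j : ℕ) < i ∧ (i : ℕ) - j - 1 < m then c ^ ((i : ℕ) - j - 1) else 0 := by
  have hterm (k : ℕ) :
      lowerShift n R * (c • lowerShift n R) ^ k = c ^ k • lowerShift n R ^ (k + 1) := by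
    rw [_root_.smul_pow, mul_smul_comm, pow_succ']
  simp only [mul_sum, hterm, sum_apply, smul_apply, lowerShift_pow_apply, smul_eq_mul, mul_ite,
    mul_one, mul_zero]
  by_cases hji : (j : ℕ) < i
  · have hcond (k : ℕ) : (i : ℕ) = j + (k + 1) ↔ (i : ℕ) - j - 1 = k := by omega
    simp only [hcond, sum_ite_eq, mem_range, hji, true_and]
  · rw [if_neg fun h => hji h.1]
    exact sum_eq_zero fun k _ => if_neg (by omega)

theorem conjTranspose_lowerShift_mul_self {𝕜 : Type*} [RCLike 𝕜] :
    (lowerShift n 𝕜)ᴴ * lowerShift n 𝕜 =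
      diagonal fun j : Fin n => if (j : ℕ) + 1 < n then 1 else 0 := by
  ext j k
  simp only [mul_apply, conjTranspose_apply, lowerShift_apply, diagonal_apply, apply_ite star,
    star_one, star_zero, ite_zero_mul_ite_zero, mul_one]
  by_cases h : (j : ℕ) + 1 < n ∧ j = k
  · obtain ⟨hj, rfl⟩ := h
    rw [sum_eq_single ⟨j + 1, hj⟩]
    · simp [hj]
    · exact fun l _ hl => if_neg fun h' => hl (Fin.ext h'.1)
    · simp
  · rw [ite_eq_right_iff.mpr fun hjk => if_neg fun hj => h ⟨hj, hjk⟩]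
    refine sum_eq_zero fun l _ => if_neg ?_
    rintro ⟨h1, h2⟩
    exact h ⟨by omega, Fin.ext (by omega)⟩

theorem l2_opNorm_lowerShift_le {𝕜 : Type*} [RCLike 𝕜] : ‖lowerShift n 𝕜‖ ≤ 1 := by
  have h := l2_opNorm_conjTranspose_mul_self (lowerShift n 𝕜)
  rw [conjTranspose_lowerShift_mul_self, l2_opNorm_diagonal] at h
  have hdiag : ‖fun j : Fin n => if (j : ℕ) + 1 < n then (1 : 𝕜) else 0‖ ≤ 1 :=
    (pi_norm_le_iff_of_nonneg zero_le_one).mpr fun j => by split_ifs <;> simp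
  nlinarith [norm_nonneg (lowerShift n 𝕜)]

end Matrix

open Matrix

theorem Tstar_eq_blaschke_lowerShift (n : ℕ) (lam : ℝ) :
    Tstar n lam = blaschke lam (lowerShift n ℝ) n := by
  ext i j
  rw [blaschke, Matrix.add_apply, Matrix.smul_apply, lowerShift_mul_geom_sum_apply,
    algebraMap_matrix_apply, Tstar, of_apply, Algebra.algebraMap_self, RingHom.id_apply,
    smul_eq_mul]
  rcases lt_trichotomy i j with hij | rfl | hij
  · simp [Fin.lt_def.mp hij, hij.ne, (Fin.lt_def.mp hij).not_gt]
  · simp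
  · have hlt : (i : ℕ) - j - 1 < n := by omega
    simp [Fin.lt_def.mp hij, hij.ne', (Fin.lt_def.mp hij).not_gt, hlt, mul_comm]

/-- The model Toeplitz matrix `T*` is a contraction whose minimal polynomial is
`(z - λ)^n` (so its only eigenvalue is `λ`). -/
theorem stmt11 (n : ℕ) (hn : 1 ≤ n) (lam : ℝ) (hlam : -1 < lam) (hlam' : lam < 1) :
    ‖Tstar n lam‖ ≤ 1 ∧
    minpoly ℝ (Tstar n lam) = (Polynomial.X - Polynomial.C lam) ^ n ∧
    spectrum ℝ (Tstar n lam) = {lam} := by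
  have hS : lowerShift n ℝ ^ n = 0 := lowerShift_pow_self
  have hc : IsUnit (1 - lam ^ 2) := isUnit_iff_ne_zero.mpr (by nlinarith)
  have hpow := pow_blaschke_sub_algebraMap_eq_zero_iff hS hc
  have : Nonempty (Fin n) := ⟨⟨0, hn⟩⟩
  rw [Tstar_eq_blaschke_lowerShift]
  exact ⟨l2_opNorm_blaschke_le_one (abs_le.mpr ⟨hlam.le, hlam'.le⟩) hS l2_opNorm_lowerShift_le,
    minpoly_eq_X_sub_C_pow ((hpow n).mpr hS) (mt (hpow _).mp (lowerShift_pow_pred_ne_zero hn)),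
    spectrum_eq_singleton_of_isNilpotent_sub ⟨n, (hpow n).mpr hS⟩⟩
end

section
/- Let T be an n×n complex contraction (‖T‖ ≤ 1) all of whose eigenvalues lie on the unit circle. Then for every ζ ∈ ℂ not in the spectrum, ‖(ζ - T)^{-1}‖ ≤ 1/dist(ζ, σ(T)), where dist is Euclidean distance to the spectrum. -/
open scoped Matrix.Norms.L2Operator ComplexOrder

/-!
A contraction whose eigenvalues all have modulus one has `|det T| = 1`, so the positive
contraction `Tᴴ T` has eigenvalues in `[0, 1]` with product `1`; hence `Tᴴ T = 1` and `T` is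
unitary, in particular normal. For a normal element the resolvent at `ζ` is the continuous
functional calculus image of `z ↦ (ζ - z)⁻¹`, whose norm is its supremum over the spectrum.
-/

theorem Fintype.eq_one_of_prod_eq_one_of_le_one {ι R : Type*} [Fintype ι] [CommSemiring R]
    [PartialOrder R] [IsOrderedRing R] {f : ι → R} (h0 : ∀ i, 0 ≤ f i) (h1 : ∀ i, f i ≤ 1)
    (hprod : ∏ i, f i = 1) (j : ι) : f j = 1 := by
  classical
  refine (h1 j).antisymm ?_
  calc 1 = f j * ∏ i ∈ Finset.univ.erase j, f i := by
        rw [Finset.mul_prod_erase _ _ (Finset.mem_univ j), hprod]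
    _ ≤ f j * 1 := by gcongr; exacts [h0 j, Finset.prod_le_one (fun i _ ↦ h0 i) (fun i _ ↦ h1 i)]
    _ = f j := mul_one _

namespace Matrix

variable {n : Type*} [Fintype n] [DecidableEq n]

theorem norm_det_eq_one_of_unimodular_spectrum {K : Type*} [NormedField K] [IsAlgClosed K]
    {T : Matrix n n K} (hspec : ∀ μ ∈ spectrum K T, ‖μ‖ = 1) : ‖T.det‖ = 1 := by
  rw [det_eq_prod_roots_charpoly, ← normHom_apply, map_multiset_prod]
  refine Multiset.prod_eq_one fun x hx ↦ ?_
  obtain ⟨μ, hμ, rfl⟩ := Multiset.mem_map.mp hx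
  exact hspec μ (mem_spectrum_iff_isRoot_charpoly.mpr (Polynomial.isRoot_of_mem_roots hμ))

theorem PosSemidef.eq_one_of_norm_le_one_of_det_eq_one {𝕜 : Type*} [RCLike 𝕜]
    {A : Matrix n n 𝕜} (hA : A.PosSemidef) (hnorm : ‖A‖ ≤ 1) (hdet : A.det = 1) : A = 1 := by
  have eigenvalues_le_one (i : n) : hA.isHermitian.eigenvalues i ≤ 1 := by
    have : Nonempty n := ⟨i⟩
    have hmem :=
      (spectrum.algebraMap_mem_iff 𝕜).mpr (hA.isHermitian.eigenvalues_mem_spectrum_real i)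
    calc hA.isHermitian.eigenvalues i ≤ ‖(hA.isHermitian.eigenvalues i : 𝕜)‖ := by
          rw [RCLike.norm_ofReal]; exact le_abs_self _
      _ ≤ ‖A‖ := spectrum.norm_le_norm_of_mem hmem
      _ ≤ 1 := hnorm
  have prod_eigenvalues : ∏ i, hA.isHermitian.eigenvalues i = 1 := by
    exact_mod_cast hA.isHermitian.det_eq_prod_eigenvalues.symm.trans hdet
  have eigenvalues_eq_one := Fintype.eq_one_of_prod_eq_one_of_le_one hA.eigenvalues_nonneg
    eigenvalues_le_one prod_eigenvalues
  refine CFC.eq_one_of_spectrum_subset_one (R := ℝ) A ?_ hA.isHermitian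
  rw [hA.isHermitian.spectrum_real_eq_range_eigenvalues]
  rintro _ ⟨i, rfl⟩
  exact eigenvalues_eq_one i

theorem mem_unitaryGroup_of_norm_le_one_of_unimodular_spectrum {T : Matrix n n ℂ}
    (hT : ‖T‖ ≤ 1) (hspec : ∀ μ ∈ spectrum ℂ T, ‖μ‖ = 1) : T ∈ unitaryGroup n ℂ := by
  rw [mem_unitaryGroup_iff']
  refine (posSemidef_conjTranspose_mul_self T).eq_one_of_norm_le_one_of_det_eq_one ?_ ?_
  · rw [← star_eq_conjTranspose, CStarRing.norm_star_mul_self]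
    nlinarith [norm_nonneg T]
  · rw [det_mul, det_conjTranspose, Complex.star_def, ← Complex.normSq_eq_conj_mul_self,
      Complex.normSq_eq_norm_sq, norm_det_eq_one_of_unimodular_spectrum hspec]
    norm_num

end Matrix

theorem IsStarNormal.norm_resolvent_le_inv_infDist {A : Type*} [CStarAlgebra A] {a : A}
    [IsStarNormal a] {z : ℂ} (hz : z ∉ spectrum ℂ a) :
    ‖resolvent a z‖ ≤ (Metric.infDist z (spectrum ℂ a))⁻¹ := by
  have resolvent_eq_cfc : resolvent a z = cfc (fun x ↦ (z - x)⁻¹) a := by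
    rw [cfc_inv (fun x ↦ z - x) a fun x hx h ↦ hz (sub_eq_zero.mp h ▸ hx),
      cfc_sub (fun _ ↦ z) (fun x ↦ x) a, cfc_const z a, cfc_id' ℂ a]
    rfl
  rw [resolvent_eq_cfc]
  refine norm_cfc_le (inv_nonneg.mpr Metric.infDist_nonneg) fun x hx ↦ ?_
  have hpos : 0 < Metric.infDist z (spectrum ℂ a) :=
    ((spectrum.isClosed a).notMem_iff_infDist_pos ⟨x, hx⟩).mp hz
  rw [norm_inv, ← dist_eq_norm]
  exact inv_anti₀ hpos (Metric.infDist_le_dist_of_mem hx)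

/-- A contraction with unimodular spectrum satisfies linear resolvent growth with
constant 1: `‖(ζ - T)⁻¹‖ ≤ 1 / dist(ζ, σ(T))`. -/
theorem stmt13 (n : ℕ) (T : Matrix (Fin n) (Fin n) ℂ) (hT : ‖T‖ ≤ 1)
    (hspec : ∀ lam ∈ spectrum ℂ T, ‖lam‖ = 1)
    (zeta : ℂ) (hzeta : zeta ∉ spectrum ℂ T) :
    ‖(zeta • (1 : Matrix (Fin n) (Fin n) ℂ) - T)⁻¹‖
      ≤ 1 / Metric.infDist zeta (spectrum ℂ T) := by
  have : IsStarNormal T := isStarNormal_of_mem_unitary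
    (T.mem_unitaryGroup_of_norm_le_one_of_unimodular_spectrum hT hspec)
  rw [one_div, ← Algebra.algebraMap_eq_smul_one, Matrix.nonsing_inv_eq_ringInverse]
  exact IsStarNormal.norm_resolvent_le_inv_infDist hzeta
end

section
/- An n×n complex contraction all of whose eigenvalues have modulus 1 is unitary. -/
/-!
`T*T` is Hermitian with norm `‖T‖² ≤ 1`, so its eigenvalues lie in `[0, 1]`. Their product is
`det (T*T) = |det T|²`, and `|det T|` is the product of the moduli of the eigenvalues of `T`,
which is `1`. Numbers in `[0, 1]` with product `1` are all `1`, so `T*T = 1` by the spectral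
theorem.
-/

open Matrix
open scoped Matrix.Norms.L2Operator

theorem Fintype.prod_eq_one_iff_of_nonneg_of_le_one {ι : Type*} [Fintype ι] {f : ι → ℝ}
    (h0 : 0 ≤ f) (h1 : f ≤ 1) : ∏ i, f i = 1 ↔ f = 1 := by
  lift f to ι → NNReal using h0
  have hf : f ≤ 1 := fun i => by exact_mod_cast h1 i
  rw [← NNReal.coe_prod, NNReal.coe_eq_one, Fintype.prod_eq_one_iff_of_le_one hf]
  simp only [funext_iff, Pi.one_apply, NNReal.coe_eq_one]

namespace Matrix

theorem norm_det_eq_one_of_norm_eq_one_of_mem_spectrum {K ι : Type*} [NormedField K]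
    [IsAlgClosed K] [Fintype ι] [DecidableEq ι] {A : Matrix ι ι K}
    (h : ∀ μ ∈ spectrum K A, ‖μ‖ = 1) : ‖A.det‖ = 1 := by
  rw [det_eq_prod_roots_charpoly, ← normHom_apply, map_multiset_prod]
  refine Multiset.prod_eq_one fun x hx => ?_
  obtain ⟨μ, hμ, rfl⟩ := Multiset.mem_map.mp hx
  exact h μ (mem_spectrum_of_isRoot_charpoly (Polynomial.isRoot_of_mem_roots hμ))

variable {𝕜 ι : Type*} [RCLike 𝕜] [Fintype ι] [DecidableEq ι]

theorem det_conjTranspose_mul_self (A : Matrix ι ι 𝕜) :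
    (Aᴴ * A).det = (‖A.det‖ ^ 2 : ℝ) := by
  rw [det_mul, det_conjTranspose, RCLike.star_def, RCLike.conj_mul, RCLike.ofReal_pow]

theorem IsHermitian.eigenvalues_le_l2_opNorm {A : Matrix ι ι 𝕜} (hA : A.IsHermitian) (i : ι) :
    hA.eigenvalues i ≤ ‖A‖ := by
  -- the matrix ring is then nontrivial, so the C⋆-norm satisfies `‖1‖ = 1`
  have : Nonempty ι := ⟨i⟩
  have hmem : (hA.eigenvalues i : 𝕜) ∈ spectrum 𝕜 A :=
    hA.spectrum_eq_image_range ▸ ⟨_, ⟨i, rfl⟩, rfl⟩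
  calc hA.eigenvalues i ≤ ‖(hA.eigenvalues i : 𝕜)‖ := by
        rw [RCLike.norm_ofReal]; exact le_abs_self _
    _ ≤ ‖A‖ := spectrum.norm_le_norm_of_mem hmem

theorem IsHermitian.eq_one_of_eigenvalues_eq_one {A : Matrix ι ι 𝕜} (hA : A.IsHermitian)
    (h : hA.eigenvalues = 1) : A = 1 := by
  rw [hA.spectral_theorem, h]
  simp

end Matrix

/-- A contraction all of whose eigenvalues have modulus one is unitary. -/
theorem stmt14 (n : ℕ) (T : Matrix (Fin n) (Fin n) ℂ) (hT : ‖T‖ ≤ 1)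
    (hspec : ∀ lam ∈ spectrum ℂ T, ‖lam‖ = 1) :
    Tᴴ * T = 1 := by
  have hA : (Tᴴ * T).IsHermitian := isHermitian_conjTranspose_mul_self T
  have hle : hA.eigenvalues ≤ 1 := fun i => calc
    hA.eigenvalues i ≤ ‖Tᴴ * T‖ := hA.eigenvalues_le_l2_opNorm i
    _ = ‖T‖ * ‖T‖ := l2_opNorm_conjTranspose_mul_self T
    _ ≤ 1 := mul_le_one₀ hT (norm_nonneg T) hT
  have hprod : ∏ i, hA.eigenvalues i = 1 := by
    have hdet := hA.det_eq_prod_eigenvalues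
    rw [det_conjTranspose_mul_self, norm_det_eq_one_of_norm_eq_one_of_mem_spectrum hspec,
      one_pow, ← RCLike.ofReal_prod] at hdet
    exact (RCLike.ofReal_injective hdet).symm
  exact hA.eq_one_of_eigenvalues_eq_one <|
    (Fintype.prod_eq_one_iff_of_nonneg_of_le_one
      (eigenvalues_conjTranspose_mul_self_nonneg T) hle).mp hprod
end

section
/- Let X_{1,2} be the n×n lower-triangular Toeplitz matrix with 1 on the diagonal and 2 on every subdiagonal. Then the spectral norm of X_{1,2} equals cot(π/(4n)). -/
/-!
Put `v i = W (i + 1) - W i` with `W 0 = 0` (partial sums); then `(X v) i = W (i + 1) + W i`,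
so `‖X‖²` is the largest value of `∑ (W (k+1) + W k)² / ∑ (W (k+1) - W k)²`. For `φ = π / (4n)`
the identity `sin² φ (cot² φ (a - b)² - (a + b)²) = cos 2φ (a² + b²) - 2ab` reduces the claim to
nonnegativity of the tridiagonal form `∑ cos θ (W (k+1)² + W k²) - 2 W (k+1) W k` at
`θ = 2φ = π / (2n)`. A discrete Picone identity with the ground state `k ↦ sin (kθ)` writes this
form as a sum of squares plus `sin θ cot (nθ) W n²`, and `cot (nθ) = 0`. So the form is
nonnegative and vanishes at `W k = sin (kθ)`, which gives the extremal vector.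
-/

open scoped Matrix.Norms.L2Operator

open Finset Real

theorem cos_mul_sq_add_sq_sub_two_mul_eq (x θ a b : ℝ) (hx : sin x ≠ 0)
    (hxθ : sin (x + θ) ≠ 0) :
    cos θ * (a ^ 2 + b ^ 2) - 2 * a * b =
      sin θ * (cot (x + θ) * a ^ 2 - cot x * b ^ 2) +
        (sin x * a - sin (x + θ) * b) ^ 2 / (sin x * sin (x + θ)) := by
  rw [cot_eq_cos_div_sin, cot_eq_cos_div_sin]
  field_simp
  rw [sin_add, cos_add]
  linear_combination (a ^ 2 * sin x ^ 2) * sin_sq_add_cos_sq θ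

theorem sin_sq_mul_cot_sq_sub_eq (φ a b : ℝ) (hφ : sin φ ≠ 0) :
    sin φ ^ 2 * (cot φ ^ 2 * (a - b) ^ 2 - (a + b) ^ 2) =
      cos (2 * φ) * (a ^ 2 + b ^ 2) - 2 * a * b := by
  have hcot : sin φ ^ 2 * cot φ ^ 2 = cos φ ^ 2 := by
    rw [cot_eq_cos_div_sin]
    field_simp
  rw [cos_two_mul']
  linear_combination (a - b) ^ 2 * hcot - 2 * a * b * sin_sq_add_cos_sq φ

noncomputable def tridiagForm (θ : ℝ) (n : ℕ) (W : ℕ → ℝ) : ℝ :=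
  ∑ k ∈ range n, (cos θ * (W (k + 1) ^ 2 + W k ^ 2) - 2 * W (k + 1) * W k)

/-- The `k = 0` summand on the right has denominator `sin 0 * sin θ = 0`, so it is `0`. -/
theorem tridiagForm_eq (θ : ℝ) (n : ℕ) (W : ℕ → ℝ) (hW : W 0 = 0)
    (hsin : ∀ k ∈ Icc 1 n, sin (k * θ) ≠ 0) :
    tridiagForm θ n W = sin θ * cot (n * θ) * W n ^ 2 +
      ∑ k ∈ range n, (sin (k * θ) * W (k + 1) - sin ((k + 1) * θ) * W k) ^ 2 /
        (sin (k * θ) * sin ((k + 1) * θ)) := by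
  have hterm : ∀ k ∈ range n,
      cos θ * (W (k + 1) ^ 2 + W k ^ 2) - 2 * W (k + 1) * W k =
        (sin θ * cot ((k + 1 : ℕ) * θ) * W (k + 1) ^ 2 - sin θ * cot (k * θ) * W k ^ 2) +
          (sin (k * θ) * W (k + 1) - sin ((k + 1) * θ) * W k) ^ 2 /
            (sin (k * θ) * sin ((k + 1) * θ)) := by
    intro k hk
    have hk := mem_range.mp hk
    rcases Nat.eq_zero_or_pos k with rfl | hk0
    · have hθ : sin θ ≠ 0 := by simpa using hsin 1 (by simp; omega)
      simp [hW, cot_eq_cos_div_sin, mul_div_cancel₀, hθ]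
    · have h1 := hsin k (mem_Icc.mpr ⟨hk0, hk.le⟩)
      have h2 := hsin (k + 1) (mem_Icc.mpr ⟨by omega, hk⟩)
      push_cast at h2 ⊢
      rw [add_mul, one_mul] at h2 ⊢
      rw [cos_mul_sq_add_sq_sub_two_mul_eq _ _ _ _ h1 h2]
      ring
  rw [tridiagForm, sum_congr rfl hterm, sum_add_distrib,
    sum_range_sub (fun k => sin θ * cot (k * θ) * W k ^ 2)]
  simp [hW]

theorem sin_nat_mul_nonneg {θ : ℝ} (hθ : 0 ≤ θ) {k n : ℕ} (hk : k ≤ n) (hnθ : n * θ ≤ π) :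
    0 ≤ sin (k * θ) :=
  sin_nonneg_of_nonneg_of_le_pi (by positivity) ((by gcongr : (k : ℝ) * θ ≤ n * θ).trans hnθ)

theorem sin_nat_mul_pos {θ : ℝ} (hθ : 0 < θ) {k n : ℕ} (hk : k ∈ Icc 1 n) (hnθ : n * θ < π) :
    0 < sin (k * θ) := by
  obtain ⟨hk1, hkn⟩ := mem_Icc.mp hk
  have hk0 : (0 : ℝ) < k := by exact_mod_cast hk1
  exact sin_pos_of_pos_of_lt_pi (by positivity) ((by gcongr : (k : ℝ) * θ ≤ n * θ).trans_lt hnθ)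

theorem cot_nonneg_of_pos_of_le_pi_div_two {x : ℝ} (h0 : 0 < x) (h : x ≤ π / 2) : 0 ≤ cot x := by
  rw [cot_eq_cos_div_sin]
  exact div_nonneg (cos_nonneg_of_mem_Icc ⟨by linarith [pi_pos], h⟩)
    (sin_nonneg_of_nonneg_of_le_pi h0.le (by linarith [pi_pos]))

theorem tridiagForm_nonneg {θ : ℝ} {n : ℕ} (hθ : 0 < θ) (hnθ : n * θ ≤ π / 2) {W : ℕ → ℝ}
    (hW : W 0 = 0) : 0 ≤ tridiagForm θ n W := by
  obtain rfl | hn := n.eq_zero_or_pos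
  · simp [tridiagForm]
  have hnθ' : n * θ < π := by linarith [pi_pos]
  rw [tridiagForm_eq θ n W hW fun k hk => (sin_nat_mul_pos hθ hk hnθ').ne']
  have hcot := cot_nonneg_of_pos_of_le_pi_div_two (by positivity) hnθ
  have hsinθ := sin_nat_mul_pos hθ (k := 1) (mem_Icc.mpr ⟨le_rfl, hn⟩) hnθ'
  rw [Nat.cast_one, one_mul] at hsinθ
  refine add_nonneg (by positivity) (sum_nonneg fun k hk => div_nonneg (sq_nonneg _) ?_)
  have hk := mem_range.mp hk
  exact mul_nonneg (sin_nat_mul_nonneg hθ.le hk.le hnθ'.le)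
    (by exact_mod_cast sin_nat_mul_nonneg hθ.le (k := k + 1) hk hnθ'.le)

theorem sin_half_pos_of_nat_mul_le {θ : ℝ} (hθ : 0 < θ) {n : ℕ} (hn : 0 < n)
    (hnθ : n * θ ≤ π / 2) : 0 < sin (θ / 2) := by
  have : θ ≤ n * θ := le_mul_of_one_le_left hθ.le (by exact_mod_cast hn)
  exact sin_pos_of_pos_of_lt_pi (by positivity) (by linarith [pi_pos])

theorem tridiagForm_sin_eq_zero {θ : ℝ} {n : ℕ} (hθ : 0 < θ) (hnθ : n * θ = π / 2) :
    tridiagForm θ n (fun k => sin (k * θ)) = 0 := by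
  have hnθ' : n * θ < π := by linarith [pi_pos]
  rw [tridiagForm_eq θ n _ (by simp) fun k hk => (sin_nat_mul_pos hθ hk hnθ').ne', hnθ]
  simp [cot_eq_cos_div_sin, mul_comm]

theorem sin_sq_mul_cot_sq_sum_sub_eq (φ : ℝ) (hφ : sin φ ≠ 0) (n : ℕ) (W : ℕ → ℝ) :
    sin φ ^ 2 * (cot φ ^ 2 * ∑ k ∈ range n, (W (k + 1) - W k) ^ 2 -
      ∑ k ∈ range n, (W (k + 1) + W k) ^ 2) = tridiagForm (2 * φ) n W := by
  rw [mul_sum, ← sum_sub_distrib, mul_sum, tridiagForm]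
  exact sum_congr rfl fun k _ => sin_sq_mul_cot_sq_sub_eq φ _ _ hφ

theorem sum_sq_add_le {θ : ℝ} {n : ℕ} (hθ : 0 < θ) (hnθ : n * θ ≤ π / 2) {W : ℕ → ℝ}
    (hW : W 0 = 0) :
    ∑ k ∈ range n, (W (k + 1) + W k) ^ 2 ≤
      cot (θ / 2) ^ 2 * ∑ k ∈ range n, (W (k + 1) - W k) ^ 2 := by
  obtain rfl | hn := n.eq_zero_or_pos
  · simp
  have hsin := sin_half_pos_of_nat_mul_le hθ hn hnθ
  have key := sin_sq_mul_cot_sq_sum_sub_eq (θ / 2) hsin.ne' n W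
  rw [mul_div_cancel₀ θ two_ne_zero] at key
  have := key ▸ tridiagForm_nonneg hθ hnθ hW
  exact sub_nonneg.mp (nonneg_of_mul_nonneg_right this (by positivity))

theorem sum_sq_add_sin_eq {θ : ℝ} {n : ℕ} (hθ : 0 < θ) (hnθ : n * θ = π / 2) :
    ∑ k ∈ range n, (sin ((k + 1 : ℕ) * θ) + sin (k * θ)) ^ 2 =
      cot (θ / 2) ^ 2 * ∑ k ∈ range n, (sin ((k + 1 : ℕ) * θ) - sin (k * θ)) ^ 2 := by
  have hn : 0 < n := Nat.pos_of_ne_zero fun h => by simp [h] at hnθ; linarith [pi_pos]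
  have hsin := sin_half_pos_of_nat_mul_le hθ hn hnθ.le
  have key := sin_sq_mul_cot_sq_sum_sub_eq (θ / 2) hsin.ne' n fun k => sin (k * θ)
  rw [mul_div_cancel₀ θ two_ne_zero, tridiagForm_sin_eq_zero hθ hnθ] at key
  have := (mul_eq_zero.mp key).resolve_left (by positivity)
  linarith

theorem Fin.sum_ite_lt_eq_sum_range (f : ℕ → ℝ) {m n : ℕ} (hmn : m ≤ n) :
    ∑ j : Fin n, (if (j : ℕ) < m then f j else 0) = ∑ j ∈ range m, f j := by
  rw [Fin.sum_univ_eq_sum_range (fun j => if j < m then f j else 0), ← sum_filter]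
  congr 1
  ext j
  simp only [mem_filter, mem_range]
  omega

theorem Xmat_one_two_apply {n : ℕ} (i j : Fin n) :
    Xmat n 1 2 i j = (if (j : ℕ) < i + 1 then 1 else 0) + (if (j : ℕ) < i then 1 else 0) := by
  simp only [Xmat, Matrix.of_apply, one_pow, mul_one, Fin.ext_iff]
  split_ifs <;> first | (exfalso; omega) | norm_num

theorem Xmat_mulVec_apply {n : ℕ} {W : ℕ → ℝ} (hW : W 0 = 0) {v : Fin n → ℝ}
    (hv : ∀ i : Fin n, v i = W (i + 1) - W i) (i : Fin n) :
    (Xmat n 1 2).mulVec v i = W (i + 1) + W i := by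
  simp only [Matrix.mulVec, dotProduct, Xmat_one_two_apply, add_mul, ite_mul, one_mul, zero_mul,
    sum_add_distrib, hv]
  rw [Fin.sum_ite_lt_eq_sum_range (fun j => W (j + 1) - W j) i.isLt,
    Fin.sum_ite_lt_eq_sum_range (fun j => W (j + 1) - W j) i.isLt.le, sum_range_sub,
    sum_range_sub, hW]
  ring

theorem exists_eq_sub_succ {n : ℕ} (v : Fin n → ℝ) :
    ∃ W : ℕ → ℝ, W 0 = 0 ∧ ∀ i : Fin n, v i = W (i + 1) - W i :=
  ⟨fun k => ∑ j ∈ range k, if h : j < n then v ⟨j, h⟩ else 0, by simp,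
    fun i => by simp [sum_range_succ]⟩

theorem EuclideanSpace.norm_sq_eq_sum_range {n : ℕ} {x : EuclideanSpace ℝ (Fin n)} {f : ℕ → ℝ}
    (hx : ∀ i : Fin n, x i = f i) : ‖x‖ ^ 2 = ∑ k ∈ range n, f k ^ 2 := by
  simp only [EuclideanSpace.norm_sq_eq, hx, Real.norm_eq_abs, sq_abs]
  exact Fin.sum_univ_eq_sum_range (fun k => f k ^ 2) n

theorem norm_sq_toEuclideanCLM_Xmat_s15 {n : ℕ} {W : ℕ → ℝ} (hW : W 0 = 0)
    {x : EuclideanSpace ℝ (Fin n)} (hx : ∀ i : Fin n, x i = W (i + 1) - W i) :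
    ‖Matrix.toEuclideanCLM (𝕜 := ℝ) (Xmat n 1 2) x‖ ^ 2 = ∑ k ∈ range n, (W (k + 1) + W k) ^ 2 :=
  EuclideanSpace.norm_sq_eq_sum_range (Xmat_mulVec_apply hW hx)

theorem ContinuousLinearMap.opNorm_eq_of_sq_le {𝕜 E F : Type*} [NontriviallyNormedField 𝕜]
    [SeminormedAddCommGroup E] [SeminormedAddCommGroup F] [NormedSpace 𝕜 E] [NormedSpace 𝕜 F]
    (A : E →L[𝕜] F) {c : ℝ} (hc : 0 ≤ c) (hle : ∀ x, ‖A x‖ ^ 2 ≤ c ^ 2 * ‖x‖ ^ 2) {x₀ : E}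
    (hx₀ : ‖x₀‖ ≠ 0) (heq : ‖A x₀‖ ^ 2 = c ^ 2 * ‖x₀‖ ^ 2) : ‖A‖ = c := by
  refine A.opNorm_eq_of_bounds hc (fun x => ?_) fun N hN hAN => ?_
  · rw [← pow_le_pow_iff_left₀ (norm_nonneg _) (by positivity) two_ne_zero, mul_pow]
    exact hle x
  · have h := hAN x₀
    rw [← pow_le_pow_iff_left₀ (norm_nonneg _) (by positivity) two_ne_zero, mul_pow, heq] at h
    exact (pow_le_pow_iff_left₀ hc hN two_ne_zero).mp
      (le_of_mul_le_mul_right h (by positivity))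

/-- `‖X_{1,2}‖ = cot(π/(4n))`: the Davies–Simon constant. -/
theorem stmt15 (n : ℕ) (hn : 1 ≤ n) :
    ‖Xmat n 1 2‖ = Real.cot (Real.pi / (4 * n)) := by
  set θ := π / (2 * n) with hθ_def
  have hn0 : (0 : ℝ) < n := by exact_mod_cast hn
  have hθ : 0 < θ := by positivity
  have hnθ : n * θ = π / 2 := by rw [hθ_def]; field_simp
  have hθπ : θ ≤ π / 2 := hnθ ▸ le_mul_of_one_le_left hθ.le (by exact_mod_cast hn)
  have hφ : π / (4 * n) = θ / 2 := by rw [hθ_def]; field_simp; ring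
  let x₀ : EuclideanSpace ℝ (Fin n) := WithLp.toLp 2 fun i => sin ((i + 1 : ℕ) * θ) - sin (i * θ)
  have hx₀ : ∀ i : Fin n, x₀ i = sin ((i + 1 : ℕ) * θ) - sin (i * θ) := fun _ => rfl
  rw [hφ, ← Matrix.l2_opNorm_toEuclideanCLM]
  refine (Matrix.toEuclideanCLM (𝕜 := ℝ) (Xmat n 1 2)).opNorm_eq_of_sq_le
    (cot_nonneg_of_pos_of_le_pi_div_two (by positivity) (by linarith)) (fun x => ?_)
    (x₀ := x₀) ?_ ?_
  · obtain ⟨W, hW, hx⟩ := exists_eq_sub_succ x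
    rw [norm_sq_toEuclideanCLM_Xmat_s15 hW hx,
      EuclideanSpace.norm_sq_eq_sum_range (f := fun k => W (k + 1) - W k) hx]
    exact sum_sq_add_le hθ hnθ.le hW
  · refine norm_ne_zero_iff.mpr fun h => ?_
    have := hx₀ ⟨0, hn⟩
    simp [h] at this
    exact (sin_pos_of_pos_of_lt_pi hθ (by linarith)).ne this
  · rw [norm_sq_toEuclideanCLM_Xmat_s15 (W := fun k => sin (k * θ)) (by simp) hx₀,
      EuclideanSpace.norm_sq_eq_sum_range
        (f := fun k => sin ((k + 1 : ℕ) * θ) - sin (k * θ)) hx₀]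
    exact sum_sq_add_sin_eq hθ hnθ
end

section
/- Let X_{1,1} be the n×n lower-triangular matrix of all ones (1 on the diagonal and on every subdiagonal). Then its spectral norm equals 1/(2 sin(π/(4n+2))). -/
open scoped Matrix.Norms.L2Operator

/-!
Put `θ = π / (4n + 2)` and `c = 1 / (2 sin θ)`. The vectors `v j = cos ((2j + 1) θ)` and
`u i = sin ((2i + 2) θ)` are positive and satisfy `X v = c u` and `Xᵀ u = c v`: both are telescoping
sums of product-to-sum identities, the second one because `cos ((2n + 1) θ) = 0`.
A positive singular pair of an entrywise nonnegative matrix realises its spectral norm: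
`c ≤ ‖X‖` since `XᵀX v = c² v`, and `‖X‖ ≤ c` by the Schur test with weights `u` and `v`.
-/

open Finset Real

namespace Matrix

variable {m n : Type*} [Fintype m] [Fintype n]

theorem sum_mulVec_sq_le_of_schur_test {A : Matrix m n ℝ} (hA : ∀ i j, 0 ≤ A i j)
    {p : m → ℝ} {q : n → ℝ} (hq : ∀ j, 0 < q j) {α β : ℝ} (hα : 0 ≤ α)
    (hAq : ∀ i, (A *ᵥ q) i ≤ α * p i) (hAp : ∀ j, (Aᵀ *ᵥ p) j ≤ β * q j) (x : n → ℝ) :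
    ∑ i, (A *ᵥ x) i ^ 2 ≤ α * β * ∑ j, x j ^ 2 := by
  have hrow : ∀ i, (A *ᵥ x) i ^ 2 ≤ α * p i * ∑ j, A i j * (x j ^ 2 / q j) := fun i =>
    calc (A *ᵥ x) i ^ 2 = (∑ j, A i j * x j) ^ 2 := rfl
      _ ≤ (A *ᵥ q) i * ∑ j, A i j * (x j ^ 2 / q j) :=
        sum_sq_le_sum_mul_sum_of_sq_le_mul _ (fun j _ => mul_nonneg (hA i j) (hq j).le)
          (fun j _ => mul_nonneg (hA i j) (div_nonneg (sq_nonneg _) (hq j).le))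
          (fun j _ => le_of_eq (by field_simp [(hq j).ne']))
      _ ≤ α * p i * ∑ j, A i j * (x j ^ 2 / q j) :=
        mul_le_mul_of_nonneg_right (hAq i)
          (sum_nonneg fun j _ => mul_nonneg (hA i j) (div_nonneg (sq_nonneg _) (hq j).le))
  calc ∑ i, (A *ᵥ x) i ^ 2 ≤ ∑ i, α * p i * ∑ j, A i j * (x j ^ 2 / q j) :=
        sum_le_sum fun i _ => hrow i
    _ = α * ∑ j, x j ^ 2 / q j * (Aᵀ *ᵥ p) j := by
      simp only [mulVec, dotProduct, transpose_apply, mul_sum]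
      rw [sum_comm]; refine sum_congr rfl fun j _ => sum_congr rfl fun i _ => by ring
    _ ≤ α * ∑ j, x j ^ 2 / q j * (β * q j) := by
      gcongr with j
      · exact div_nonneg (sq_nonneg _) (hq j).le
      · exact hAp j
    _ = α * β * ∑ j, x j ^ 2 := by
      rw [mul_assoc]; congr 1
      rw [Finset.mul_sum]; refine sum_congr rfl fun j _ => ?_
      field_simp [(hq j).ne']

theorem l2_opNorm_le_of_schur_test [DecidableEq n] {A : Matrix m n ℝ} (hA : ∀ i j, 0 ≤ A i j)
    {p : m → ℝ} {q : n → ℝ} (hq : ∀ j, 0 < q j) {α β : ℝ} (hα : 0 ≤ α)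
    (hAq : ∀ i, (A *ᵥ q) i ≤ α * p i) (hAp : ∀ j, (Aᵀ *ᵥ p) j ≤ β * q j) :
    ‖A‖ ≤ √(α * β) := by
  rw [l2_opNorm_def]
  refine ContinuousLinearMap.opNorm_le_bound _ (sqrt_nonneg _) fun x => ?_
  simp only [LinearEquiv.trans_apply, LinearMap.coe_toContinuousLinearMap', toLpLin_apply,
    EuclideanSpace.norm_eq, Real.norm_eq_abs, sq_abs,
    ← sqrt_mul' _ (sum_nonneg fun _ _ => sq_nonneg _)]
  exact sqrt_le_sqrt (sum_mulVec_sq_le_of_schur_test hA hq hα hAq hAp x)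

theorem abs_le_l2_opNorm_of_mulVec_eq_smul [DecidableEq n] (A : Matrix m n ℝ) {u : m → ℝ}
    {v : n → ℝ} {c : ℝ} (hv : v ≠ 0) (hAv : A *ᵥ v = c • u) (hAu : Aᵀ *ᵥ u = c • v) :
    |c| ≤ ‖A‖ := by
  have hAAv : (Aᴴ * A) *ᵥ v = c ^ 2 • v := by
    rw [conjTranspose_eq_transpose_of_trivial, ← mulVec_mulVec, hAv, mulVec_smul, hAu, smul_smul,
      sq]
  have hvpos : 0 < ‖WithLp.toLp 2 v‖ := norm_pos_iff.mpr (by simpa using hv)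
  have h := l2_opNorm_mulVec (Aᴴ * A) (WithLp.toLp 2 v)
  rw [l2_opNorm_conjTranspose_mul_self, hAAv, map_smul, norm_smul,
    Real.norm_of_nonneg (sq_nonneg c)] at h
  have hc : c ^ 2 ≤ ‖A‖ ^ 2 := by
    rw [sq ‖A‖]; exact le_of_mul_le_mul_right (by simpa using h) hvpos
  simpa using sq_le_sq.mp hc

theorem l2_opNorm_eq_of_pos_singular_pair [DecidableEq n] [Nonempty n] {A : Matrix m n ℝ}
    (hA : ∀ i j, 0 ≤ A i j) {u : m → ℝ} {v : n → ℝ} (hu : ∀ i, 0 < u i) (hv : ∀ j, 0 < v j)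
    {c : ℝ} (hAv : A *ᵥ v = c • u) (hAu : Aᵀ *ᵥ u = c • v) : ‖A‖ = c := by
  obtain ⟨j⟩ := ‹Nonempty n›
  have hc : 0 ≤ c := by
    refine nonneg_of_mul_nonneg_left ?_ (hv j)
    rw [← smul_eq_mul, ← Pi.smul_apply, ← hAu]
    exact sum_nonneg fun i _ => mul_nonneg (hA i j) (hu i).le
  refine le_antisymm ?_ ?_
  · calc ‖A‖ ≤ √(c * c) :=
          l2_opNorm_le_of_schur_test hA hv hc (fun i => (congrFun hAv i).le)
            (fun j => (congrFun hAu j).le)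
      _ = c := sqrt_mul_self hc
  · calc c = |c| := (abs_of_nonneg hc).symm
      _ ≤ ‖A‖ :=
        abs_le_l2_opNorm_of_mulVec_eq_smul A (fun h => (hv j).ne' (congrFun h j)) hAv hAu

end Matrix

open Matrix

lemma Xmat_one_one_apply {n : ℕ} (i j : Fin n) : Xmat n 1 1 i j = if j ≤ i then 1 else 0 := by
  simp only [Xmat, of_apply, one_pow, mul_one, ite_self, Fin.le_def]
  split_ifs <;> first | rfl | omega

lemma Xmat_one_one_mulVec {n : ℕ} (f : ℕ → ℝ) (i : Fin n) :
    (Xmat n 1 1 *ᵥ fun j : Fin n => f j) i = ∑ k ∈ range (i + 1), f k := by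
  have hrange : (range n).filter (· ≤ (i : ℕ)) = range (i + 1) := by
    ext k; simp only [mem_filter, mem_range]; omega
  simp only [mulVec, dotProduct, Xmat_one_one_apply, ite_mul, one_mul, zero_mul, Fin.le_def]
  rw [Fin.sum_univ_eq_sum_range (fun k => if k ≤ (i : ℕ) then f k else 0), ← sum_filter, hrange]

lemma Xmat_one_one_transpose_mulVec {n : ℕ} (f : ℕ → ℝ) (j : Fin n) :
    ((Xmat n 1 1)ᵀ *ᵥ fun i : Fin n => f i) j = ∑ k ∈ Ico (j : ℕ) n, f k := by
  have hrange : (range n).filter ((j : ℕ) ≤ ·) = Ico (j : ℕ) n := by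
    ext k; simp only [mem_filter, mem_range, mem_Ico]; omega
  simp only [mulVec, dotProduct, transpose_apply, Xmat_one_one_apply, ite_mul, one_mul, zero_mul,
    Fin.le_def]
  rw [Fin.sum_univ_eq_sum_range (fun k => if (j : ℕ) ≤ k then f k else 0), ← sum_filter, hrange]

lemma two_sin_mul_sum_range_cos_odd (θ : ℝ) (m : ℕ) :
    2 * sin θ * ∑ k ∈ range m, cos ((2 * k + 1) * θ) = sin (2 * m * θ) := by
  have hterm : ∀ k : ℕ, 2 * sin θ * cos ((2 * k + 1) * θ)
      = sin (2 * (k + 1 : ℕ) * θ) - sin (2 * k * θ) := fun k => by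
    rw [show 2 * ((k + 1 : ℕ) : ℝ) * θ = (2 * k + 1) * θ + θ by push_cast; ring,
      show 2 * (k : ℝ) * θ = (2 * k + 1) * θ - θ by ring, sin_add, sin_sub]
    ring
  rw [mul_sum, sum_congr rfl fun k _ => hterm k, sum_range_sub (fun k : ℕ => sin (2 * k * θ))]
  simp

lemma two_sin_mul_sum_Ico_sin_even (θ : ℝ) {j m : ℕ} (hjm : j ≤ m) :
    2 * sin θ * ∑ k ∈ Ico j m, sin ((2 * k + 2) * θ) =
      cos ((2 * j + 1) * θ) - cos ((2 * m + 1) * θ) := by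
  have hterm : ∀ k : ℕ, 2 * sin θ * sin ((2 * k + 2) * θ)
      = -(cos ((2 * (k + 1 : ℕ) + 1) * θ) - cos ((2 * k + 1) * θ)) := fun k => by
    rw [show (2 * ((k + 1 : ℕ) : ℝ) + 1) * θ = (2 * k + 2) * θ + θ by push_cast; ring,
      show (2 * (k : ℝ) + 1) * θ = (2 * k + 2) * θ - θ by ring, cos_add, cos_sub]
    ring
  rw [mul_sum, sum_congr rfl fun k _ => hterm k, sum_neg_distrib,
    sum_Ico_sub (fun k : ℕ => cos ((2 * k + 1) * θ)) hjm]
  ring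

/-- The spectral norm of the lower-triangular all-ones matrix is
`1/(2 sin(π/(4n+2)))`. -/
theorem stmt16 (n : ℕ) (hn : 1 ≤ n) :
    ‖Xmat n 1 1‖ = 1 / (2 * Real.sin (Real.pi / (4 * n + 2))) := by
  have : Nonempty (Fin n) := ⟨⟨0, hn⟩⟩
  set θ := π / (4 * n + 2) with hθ
  have hθpos : 0 < θ := by positivity
  have hright : (2 * n + 1) * θ = π / 2 := by rw [hθ]; field_simp; ring
  have hsin : 0 < sin θ := sin_pos_of_pos_of_lt_pi hθpos (by nlinarith [pi_pos])
  refine l2_opNorm_eq_of_pos_singular_pair (u := fun i : Fin n => sin ((2 * (i : ℕ) + 2) * θ))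
    (v := fun j : Fin n => cos ((2 * (j : ℕ) + 1) * θ)) (fun i j => ?_) (fun i => ?_)
    (fun j => ?_) ?_ ?_
  · rw [Xmat_one_one_apply]; split_ifs <;> norm_num
  · have : (i : ℝ) + 1 ≤ n := by exact_mod_cast i.isLt
    exact sin_pos_of_pos_of_lt_pi (by positivity) (by nlinarith)
  · have : (j : ℝ) + 1 ≤ n := by exact_mod_cast j.isLt
    exact cos_pos_of_mem_Ioo ⟨by nlinarith, by nlinarith⟩
  · ext i
    rw [Xmat_one_one_mulVec (fun k => cos ((2 * k + 1) * θ)), Pi.smul_apply, smul_eq_mul,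
      one_div_mul_eq_div, eq_div_iff (by positivity), mul_comm, two_sin_mul_sum_range_cos_odd]
    push_cast; ring_nf
  · ext j
    rw [Xmat_one_one_transpose_mulVec (fun k => sin ((2 * k + 2) * θ)), Pi.smul_apply,
      smul_eq_mul, one_div_mul_eq_div, eq_div_iff (by positivity), mul_comm,
      two_sin_mul_sum_Ico_sin_even θ j.isLt.le, hright, cos_pi_div_two, sub_zero]
end
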